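/- arXiv:1803.04673 — 3 statements merged into one kernel-verified Lean document; each statement's English description precedes it below -/
import Mathlib

section
/- Assume U is nonempty and there exists x̄ ∈ X with p(x̄) ∈ ℝ (i.e., dom p ≠ ∅). Then for each x* ∈ X* the following statements are equivalent: (i) p*(x*) = q(x*) (robust duality holds at x*); (ii) for every ε ≥ 0, (M^ε p)(x*) = 𝒜^ε(x*); (iii) there exists ε̄ > 0 such that (M^ε p)(x*) = 𝒜^ε(x*) for all ε ∈ (0, ε̄). -/
/-!
Unfolding `𝒜^ε(x*)`, the split `ε₁ + ε₂ = ε + η` is forced by `F_u(x, 0) ≤ p(x)` and the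
Fenchel–Young inequality, so `x ∈ 𝒜^ε(x*)` iff `p(x)` is finite and for every `η > 0` some
`F_u*(x*, y*) ≤ ε + η - (p(x) - ⟨x*, x⟩)`, i.e. iff `p(x) - ⟨x*, x⟩ ≤ -q(x*) + ε`. Since
`(M^ε p)(x*)` is the same sublevel set with `p*(x*)` in place of `q(x*)`, (i) gives (ii).
Conversely, `dom p ≠ ∅` makes `p*(x*) > -∞`, so `ε`-minimizers of `p - x*` exist for every
`ε > 0`; lying in `𝒜^ε(x*)`, they force `q(x*) ≤ p*(x*) + ε`, and weak duality `p* ≤ q` closes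
the gap.
-/

noncomputable section

namespace RobustDuality

/-- The set of `ε`-minimizers of an extended-real-valued function `h`:
`{z | h z ∈ ℝ ∧ h z ≤ inf h + ε}` (empty when `inf h ∉ ℝ`). -/
def epsArgmin {Z : Type*} (h : Z → EReal) (ε : ℝ) : Set Z :=
  {z | (∃ r : ℝ, h z = (r : EReal)) ∧ h z ≤ (⨅ w, h w) + (ε : EReal)}

variable {X : Type*} [AddCommGroup X] [Module ℝ X] [TopologicalSpace X]
  [IsTopologicalAddGroup X] [ContinuousSMul ℝ X] [LocallyConvexSpace ℝ X] [T2Space X]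

/-- `(M^ε h)(x*) := ε-argmin (h - x*)` for `h : X → EReal` and `x* ∈ X*`. -/
def M1 (h : X → EReal) (ε : ℝ) (xs : X →L[ℝ] ℝ) : Set X :=
  epsArgmin (fun x => h x - ((xs x : ℝ) : EReal)) ε

/-- Fenchel conjugate of `h : X → EReal`. -/
def conj1 (h : X → EReal) (xs : X →L[ℝ] ℝ) : EReal :=
  ⨆ x : X, ((xs x : ℝ) : EReal) - h x

/-- `ε`-subdifferential of `h : X → EReal` at `a`. -/
def epsSubdiff1 (h : X → EReal) (ε : ℝ) (a : X) : Set (X →L[ℝ] ℝ) :=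
  {xs | (∃ r : ℝ, h a = (r : EReal)) ∧
    ∀ x, h a + ((xs x - xs a - ε : ℝ) : EReal) ≤ h x}

section Pair

variable {Yu : Type*} [AddCommGroup Yu] [Module ℝ Yu] [TopologicalSpace Yu]
  [IsTopologicalAddGroup Yu] [ContinuousSMul ℝ Yu] [LocallyConvexSpace ℝ Yu] [T2Space Yu]

/-- Fenchel conjugate of `F : X × Y → EReal` at `(x*, y*)`. -/
def conj2 (F : X × Yu → EReal) (xs : X →L[ℝ] ℝ) (ys : Yu →L[ℝ] ℝ) : EReal :=
  ⨆ z : X × Yu, ((xs z.1 + ys z.2 : ℝ) : EReal) - F z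

/-- `(M^ε F)(x*, y*) := ε-argmin (F - (x*, y*))`. -/
def M2 (F : X × Yu → EReal) (ε : ℝ) (xs : X →L[ℝ] ℝ) (ys : Yu →L[ℝ] ℝ) : Set (X × Yu) :=
  epsArgmin (fun z => F z - ((xs z.1 + ys z.2 : ℝ) : EReal)) ε

/-- `ε`-subdifferential of `F : X × Y → EReal` at `a`, as a set of dual pairs. -/
def epsSubdiff2 (F : X × Yu → EReal) (ε : ℝ) (a : X × Yu) :
    Set ((X →L[ℝ] ℝ) × (Yu →L[ℝ] ℝ)) :=
  {zs | (∃ r : ℝ, F a = (r : EReal)) ∧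
    ∀ z, F a + ((zs.1 z.1 + zs.2 z.2 - zs.1 a.1 - zs.2 a.2 - ε : ℝ) : EReal) ≤ F z}

end Pair

variable {U : Type*} {Y : U → Type*} [∀ u, AddCommGroup (Y u)] [∀ u, Module ℝ (Y u)]
  [∀ u, TopologicalSpace (Y u)] [∀ u, IsTopologicalAddGroup (Y u)]
  [∀ u, ContinuousSMul ℝ (Y u)] [∀ u, LocallyConvexSpace ℝ (Y u)] [∀ u, T2Space (Y u)]

/-- The robust objective `p := sup_{u ∈ U} F_u (·, 0_u)`. -/
def pRob (F : ∀ u, X × Y u → EReal) (x : X) : EReal := ⨆ u, F u (x, 0)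

/-- `q := inf over u ∈ U and y* ∈ Y_u* of F_u*(·, y*)`. -/
def qRob (F : ∀ u, X × Y u → EReal) (xs : X →L[ℝ] ℝ) : EReal :=
  ⨅ (u : U) (ys : Y u →L[ℝ] ℝ), conj2 (F u) xs ys

/-- `S^ε(x*) := {x : p x ∈ ℝ ∧ p x - ⟨x*, x⟩ ≤ -q x* + ε}`. -/
def Sset (F : ∀ u, X × Y u → EReal) (ε : ℝ) (xs : X →L[ℝ] ℝ) : Set X :=
  {x | (∃ r : ℝ, pRob F x = (r : EReal)) ∧
    pRob F x - ((xs x : ℝ) : EReal) ≤ -qRob F xs + (ε : EReal)}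

/-- `J^ε(u) := {x : p x ∈ ℝ ∧ p x ≤ F_u(x, 0) + ε}`. -/
def Jset (F : ∀ u, X × Y u → EReal) (ε : ℝ) (u : U) : Set X :=
  {x | (∃ r : ℝ, pRob F x = (r : EReal)) ∧ pRob F x ≤ F u (x, 0) + (ε : EReal)}

/-- `A^{(ε₁,ε₂)}_{(u,y*)}(x*) := {x ∈ J^{ε₁}(u) : (x, 0) ∈ (M^{ε₂}F_u)(x*, y*)}`. -/
def Aset (F : ∀ u, X × Y u → EReal) (ε₁ ε₂ : ℝ) (u : U) (ys : Y u →L[ℝ] ℝ)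
    (xs : X →L[ℝ] ℝ) : Set X :=
  {x | x ∈ Jset F ε₁ u ∧ (x, (0 : Y u)) ∈ M2 (F u) ε₂ xs ys}

/-- `𝒜^ε(x*)`. -/
def calA (F : ∀ u, X × Y u → EReal) (ε : ℝ) (xs : X →L[ℝ] ℝ) : Set X :=
  ⋂ (η : ℝ) (_ : 0 < η),
    ⋃ (u : U) (ys : Y u →L[ℝ] ℝ) (ε₁ : ℝ) (ε₂ : ℝ)
      (_ : 0 ≤ ε₁) (_ : 0 ≤ ε₂) (_ : ε₁ + ε₂ = ε + η), Aset F ε₁ ε₂ u ys xs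

/-- `B^ε_{(u,y*)}(x*)`. -/
def Bset (F : ∀ u, X × Y u → EReal) (ε : ℝ) (u : U) (ys : Y u →L[ℝ] ℝ)
    (xs : X →L[ℝ] ℝ) : Set X :=
  ⋃ (ε₁ : ℝ) (ε₂ : ℝ) (_ : 0 ≤ ε₁) (_ : 0 ≤ ε₂) (_ : ε₁ + ε₂ = ε),
    Aset F ε₁ ε₂ u ys xs

/-- `B^ε(x*) := ⋃_{u, y*} B^ε_{(u,y*)}(x*)`. -/
def BsetAll (F : ∀ u, X × Y u → EReal) (ε : ℝ) (xs : X →L[ℝ] ℝ) : Set X :=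
  ⋃ (u : U) (ys : Y u →L[ℝ] ℝ), Bset F ε u ys xs

/-- `I^ε(x)`: the set of `ε`-active indices at `x`. -/
def Iset (F : ∀ u, X × Y u → EReal) (ε : ℝ) (x : X) : Set U :=
  {u | (∃ r : ℝ, pRob F x = (r : EReal)) ∧ pRob F x - (ε : EReal) ≤ F u (x, 0)}

/-- `C^ε(x)`. -/
def Cset (F : ∀ u, X × Y u → EReal) (ε : ℝ) (x : X) : Set (X →L[ℝ] ℝ) :=
  ⋂ (η : ℝ) (_ : 0 < η),
    ⋃ (ε₁ : ℝ) (ε₂ : ℝ) (_ : 0 ≤ ε₁) (_ : 0 ≤ ε₂) (_ : ε₁ + ε₂ = ε + η)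
      (u : U) (_ : u ∈ Iset F ε₁ x),
      Prod.fst '' epsSubdiff2 (F u) ε₂ (x, (0 : Y u))

/-- `D^ε(x)`. -/
def Dset (F : ∀ u, X × Y u → EReal) (ε : ℝ) (x : X) : Set (X →L[ℝ] ℝ) :=
  ⋃ (ε₁ : ℝ) (ε₂ : ℝ) (_ : 0 ≤ ε₁) (_ : 0 ≤ ε₂) (_ : ε₁ + ε₂ = ε)
    (u : U) (_ : u ∈ Iset F ε₁ x),
    Prod.fst '' epsSubdiff2 (F u) ε₂ (x, (0 : Y u))

/-- The exact active index set `I(x) := {u : F_u(x,0) = p(x)}` (when `p(x) ∈ ℝ`). -/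
def I0set (F : ∀ u, X × Y u → EReal) (x : X) : Set U :=
  {u | (∃ r : ℝ, pRob F x = (r : EReal)) ∧ F u (x, 0) = pRob F x}

/-- `D(x) := ⋃_{u ∈ I(x)} proj_{X*} ∂F_u(x, 0)`. -/
def D0set (F : ∀ u, X × Y u → EReal) (x : X) : Set (X →L[ℝ] ℝ) :=
  ⋃ (u : U) (_ : u ∈ I0set F x), Prod.fst '' epsSubdiff2 (F u) 0 (x, (0 : Y u))

/-- `B_{(u,y*)}(x*) := {x ∈ J(u) : (x, 0) ∈ (M F_u)(x*, y*)}`. -/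
def B0set (F : ∀ u, X × Y u → EReal) (u : U) (ys : Y u →L[ℝ] ℝ)
    (xs : X →L[ℝ] ℝ) : Set X :=
  {x | (∃ r : ℝ, pRob F x = (r : EReal)) ∧ F u (x, 0) = pRob F x ∧
    (x, (0 : Y u)) ∈ M2 (F u) 0 xs ys}

end RobustDuality

namespace RobustDuality

lemma iInf_sub_coe_eq_neg_iSup {Z : Sort*} (h : Z → EReal) (l : Z → ℝ) :
    (⨅ z, h z - (l z : EReal)) = -⨆ z, (l z : EReal) - h z := by
  calc (⨅ z, h z - (l z : EReal)) = ⨅ z, -((l z : EReal) - h z) := iInf_congr fun z => by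
        rw [EReal.neg_sub (Or.inl (EReal.coe_ne_bot _)) (Or.inl (EReal.coe_ne_top _)),
          add_comm, sub_eq_add_neg]
    _ = -⨆ z, (l z : EReal) - h z := (EReal.negOrderIso.map_iSup _).symm

lemma exists_coe_eq_sub_coe_iff {a : EReal} {c : ℝ} :
    (∃ r : ℝ, a - c = r) ↔ ∃ r : ℝ, a = r := by
  induction a using EReal.rec with
  | bot => simp [EReal.bot_sub]
  | coe x => exact ⟨fun _ => ⟨x, rfl⟩, fun _ => ⟨x - c, by norm_cast⟩⟩
  | top => simp [eq_comm]

lemma coe_le_neg_add_coe_iff {q : EReal} {a b : ℝ} :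
    (a : EReal) ≤ -q + b ↔ q ≤ ((b - a : ℝ) : EReal) := by
  induction q using EReal.rec with
  | bot => simp
  | coe c =>
    norm_cast
    constructor <;> intro h <;> linarith
  | top => simp [-EReal.coe_sub]

lemma le_of_forall_le_add_coe {a b : EReal} {e : ℝ} (he : 0 < e)
    (h : ∀ ε : ℝ, 0 < ε → ε < e → a ≤ b + ε) : a ≤ b := by
  induction b using EReal.rec with
  | bot => simpa using h (e / 2) (by linarith) (by linarith)
  | coe c =>
    refine EReal.le_of_forall_lt_iff_le.1 fun z hz => ?_
    have hcz : c < z := EReal.coe_lt_coe_iff.1 hz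
    set ε := min (z - c) (e / 2)
    calc a ≤ (c : EReal) + ε :=
          h ε (lt_min (by linarith) (by linarith)) ((min_le_right _ _).trans_lt (by linarith))
      _ ≤ z := by norm_cast; linarith [min_le_left (z - c) (e / 2)]
  | top => exact le_top

lemma mem_epsArgmin_sub_coe_iff {Z : Type*} {h : Z → EReal} {l : Z → ℝ} {ε : ℝ} {z : Z} :
    z ∈ epsArgmin (fun z => h z - (l z : EReal)) ε ↔
      (∃ r : ℝ, h z = r) ∧ h z - l z ≤ -(⨆ w, (l w : EReal) - h w) + ε := by
  rw [epsArgmin, Set.mem_ofPred_eq, exists_coe_eq_sub_coe_iff, iInf_sub_coe_eq_neg_iSup]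

/-- A finite infimum has `ε`-minimizers for every `ε > 0`. -/
lemma iInf_le_of_epsArgmin_subset {Z : Type*} {f : Z → EReal} {b : EReal} {e : ℝ}
    (he : 0 < e) (hf : (⨅ z, f z) ≠ ⊤)
    (h : ∀ ε : ℝ, 0 < ε → ε < e → epsArgmin f ε ⊆ {z | f z ≤ b + ε}) : (⨅ z, f z) ≤ b := by
  by_cases hbot : (⨅ z, f z) = ⊥
  · exact hbot ▸ bot_le
  refine le_of_forall_le_add_coe he fun ε hε hεe => ?_
  have hlt : (⨅ z, f z) < (⨅ z, f z) + ε := by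
    lift ⨅ z, f z to ℝ using ⟨hf, hbot⟩ with m
    exact_mod_cast lt_add_of_pos_right m hε
  obtain ⟨z, hz⟩ := iInf_lt_iff.1 hlt
  have hfz : ∃ r : ℝ, f z = r :=
    ⟨(f z).toReal,
      (EReal.coe_toReal (ne_top_of_lt hz) (ne_bot_of_le_ne_bot hbot (iInf_le f z))).symm⟩
  exact (iInf_le f z).trans (h ε hε hεe ⟨hfz, hz.le⟩)

section Conjugate

variable {X : Type*} [AddCommGroup X] [Module ℝ X] [TopologicalSpace X]

lemma mem_M1_iff {h : X → EReal} {ε : ℝ} {xs : X →L[ℝ] ℝ} {x : X} :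
    x ∈ M1 h ε xs ↔ (∃ r : ℝ, h x = r) ∧ h x - xs x ≤ -conj1 h xs + ε :=
  mem_epsArgmin_sub_coe_iff

variable {Yu : Type*} [AddCommGroup Yu] [Module ℝ Yu] [TopologicalSpace Yu]

lemma mem_M2_iff {F : X × Yu → EReal} {ε : ℝ} {xs : X →L[ℝ] ℝ} {ys : Yu →L[ℝ] ℝ}
    {z : X × Yu} :
    z ∈ M2 F ε xs ys ↔
      (∃ r : ℝ, F z = r) ∧ F z - ((xs z.1 + ys z.2 : ℝ) : EReal) ≤ -conj2 F xs ys + ε :=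
  mem_epsArgmin_sub_coe_iff

lemma coe_sub_le_conj2 (F : X × Yu → EReal) (xs : X →L[ℝ] ℝ) (ys : Yu →L[ℝ] ℝ)
    (z : X × Yu) : ((xs z.1 + ys z.2 : ℝ) : EReal) - F z ≤ conj2 F xs ys :=
  le_iSup (fun z => ((xs z.1 + ys z.2 : ℝ) : EReal) - F z) z

end Conjugate

section Robust

variable {X U : Type*} {Y : U → Type*} [∀ u, AddCommGroup (Y u)] {F : ∀ u, X × Y u → EReal}

lemma le_pRob (u : U) (x : X) : F u (x, 0) ≤ pRob F x :=
  le_iSup (fun u => F u (x, 0)) u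

variable [AddCommGroup X] [Module ℝ X] [TopologicalSpace X] [∀ u, Module ℝ (Y u)]
  [∀ u, TopologicalSpace (Y u)] {xs : X →L[ℝ] ℝ}

lemma coe_sub_pRob_le_conj2 (u : U) (ys : Y u →L[ℝ] ℝ) (x : X) :
    (xs x : EReal) - pRob F x ≤ conj2 (F u) xs ys := by
  calc (xs x : EReal) - pRob F x ≤ ((xs x + ys 0 : ℝ) : EReal) - F u (x, 0) := by
        rw [map_zero, add_zero]
        exact EReal.sub_le_sub le_rfl (le_pRob u x)
    _ ≤ conj2 (F u) xs ys := coe_sub_le_conj2 (F u) xs ys (x, 0)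

lemma conj1_le_qRob : conj1 (pRob F) xs ≤ qRob F xs :=
  le_iInf fun u => le_iInf fun ys => iSup_le fun _ => coe_sub_pRob_le_conj2 u ys _

/-- The split `ε₁ + ε₂ = δ` in `B^δ` is forced: `ε₁ = p(x) - F_u(x, 0)`, and `ε₂ ≥ 0` is the
Fenchel–Young inequality. -/
lemma mem_Bset_iff {δ : ℝ} {u : U} {ys : Y u →L[ℝ] ℝ} {x : X} :
    x ∈ Bset F δ u ys xs ↔
      ∃ r : ℝ, pRob F x = r ∧ conj2 (F u) xs ys ≤ ((δ - (r - xs x) : ℝ) : EReal) := by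
  simp only [Bset, Set.mem_iUnion]
  constructor
  · rintro ⟨ε₁, ε₂, -, -, rfl, ⟨⟨r, hr⟩, hJ⟩, hM⟩
    obtain ⟨⟨s, hs⟩, hle⟩ := mem_M2_iff.1 hM
    rw [hr, hs, ← EReal.coe_add, EReal.coe_le_coe_iff] at hJ
    rw [hs, map_zero, add_zero, ← EReal.coe_sub, coe_le_neg_add_coe_iff] at hle
    exact ⟨r, hr, hle.trans (EReal.coe_le_coe_iff.2 (by linarith))⟩
  · rintro ⟨r, hr, hc⟩
    have hFY : (xs x : EReal) - F u (x, 0) ≤ conj2 (F u) xs ys := by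
      simpa using coe_sub_le_conj2 (F u) xs ys (x, 0)
    have hFp : F u (x, 0) ≤ r := hr ▸ le_pRob u x
    lift F u (x, 0) to ℝ using ⟨ne_top_of_le_ne_top (EReal.coe_ne_top r) hFp, fun hbot => by
      simpa [hbot, EReal.coe_sub_bot, -EReal.coe_sub] using hFY.trans hc⟩ with s hs
    have hsr : s ≤ r := EReal.coe_le_coe_iff.1 hFp
    have hFY' : xs x - s ≤ δ - (r - xs x) :=
      EReal.coe_le_coe_iff.1 ((EReal.coe_sub _ _ ▸ hFY).trans hc)
    refine ⟨r - s, δ - (r - s), by linarith, by linarith, by ring,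
      ⟨⟨r, hr⟩, ?_⟩, mem_M2_iff.2 ⟨⟨s, hs.symm⟩, ?_⟩⟩
    · rw [hr, ← hs, ← EReal.coe_add]
      exact EReal.coe_le_coe_iff.2 (by linarith)
    · simp only [map_zero, add_zero]
      rw [← hs, ← EReal.coe_sub, coe_le_neg_add_coe_iff]
      exact hc.trans_eq (congrArg _ (by ring))

lemma mem_Sset_iff {ε : ℝ} {x : X} :
    x ∈ Sset F ε xs ↔ ∃ r : ℝ, pRob F x = r ∧ qRob F xs ≤ ((ε - (r - xs x) : ℝ) : EReal) := by
  constructor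
  · rintro ⟨⟨r, hr⟩, hle⟩
    rw [hr, ← EReal.coe_sub, coe_le_neg_add_coe_iff] at hle
    exact ⟨r, hr, hle⟩
  · rintro ⟨r, hr, hq⟩
    refine ⟨⟨r, hr⟩, ?_⟩
    rwa [hr, ← EReal.coe_sub, coe_le_neg_add_coe_iff]

lemma calA_eq_Sset (ε : ℝ) : calA F ε xs = Sset F ε xs := by
  have hcalA : calA F ε xs = ⋂ (η : ℝ) (_ : 0 < η), BsetAll F (ε + η) xs := rfl
  ext x
  simp only [hcalA, BsetAll, Set.mem_iInter, Set.mem_iUnion, mem_Bset_iff, mem_Sset_iff]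
  constructor
  · intro hx
    obtain ⟨-, -, r, hr, -⟩ := hx 1 one_pos
    refine ⟨r, hr, le_of_forall_le_add_coe one_pos fun η hη _ => ?_⟩
    obtain ⟨u, ys, r', hr', hc⟩ := hx η hη
    obtain rfl : r' = r := EReal.coe_injective (hr'.symm.trans hr)
    calc qRob F xs ≤ conj2 (F u) xs ys := (iInf_le _ u).trans (iInf_le _ ys)
      _ ≤ ((ε + η - (r' - xs x) : ℝ) : EReal) := hc
      _ = ((ε - (r' - xs x) : ℝ) : EReal) + η := by norm_cast; ring
  · rintro ⟨r, hr, hq⟩ η hη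
    have hlt : qRob F xs < ((ε + η - (r - xs x) : ℝ) : EReal) :=
      hq.trans_lt (EReal.coe_lt_coe_iff.2 (by linarith))
    obtain ⟨u, hu⟩ := iInf_lt_iff.1 hlt
    obtain ⟨ys, hys⟩ := iInf_lt_iff.1 hu
    exact ⟨u, ys, r, hr, hys.le⟩

lemma M1_pRob_eq_Sset (h : conj1 (pRob F) xs = qRob F xs) (ε : ℝ) :
    M1 (pRob F) ε xs = Sset F ε xs := by
  ext x
  rw [mem_M1_iff, h]
  rfl

lemma qRob_le_conj1_of_M1_eq_calA (hdomp : ∃ xbar : X, ∃ r : ℝ, pRob F xbar = r)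
    {εbar : ℝ} (hεbar : 0 < εbar)
    (h : ∀ ε : ℝ, 0 < ε → ε < εbar → M1 (pRob F) ε xs = calA F ε xs) :
    qRob F xs ≤ conj1 (pRob F) xs := by
  obtain ⟨xbar, r, hr⟩ := hdomp
  have hfin : (⨅ x, pRob F x - xs x) ≠ ⊤ :=
    ne_top_of_le_ne_top (by simp [hr, ← EReal.coe_sub]) (iInf_le _ xbar)
  have hinf := iInf_le_of_epsArgmin_subset (b := -qRob F xs) hεbar hfin fun ε hε hεe x hx =>
    (show x ∈ Sset F ε xs from calA_eq_Sset (F := F) ε ▸ h ε hε hεe ▸ hx).2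
  rwa [iInf_sub_coe_eq_neg_iSup, EReal.neg_le_neg_iff] at hinf

end Robust

variable {X : Type*} [AddCommGroup X] [Module ℝ X] [TopologicalSpace X]
  [IsTopologicalAddGroup X] [ContinuousSMul ℝ X] [LocallyConvexSpace ℝ X] [T2Space X]

variable {U : Type*} {Y : U → Type*} [∀ u, AddCommGroup (Y u)] [∀ u, Module ℝ (Y u)]
  [∀ u, TopologicalSpace (Y u)] [∀ u, IsTopologicalAddGroup (Y u)]
  [∀ u, ContinuousSMul ℝ (Y u)] [∀ u, LocallyConvexSpace ℝ (Y u)] [∀ u, T2Space (Y u)]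

theorem robust_duality_iff_M_eq_calA_general
    (F : ∀ u, X × Y u → EReal)
    (hdomp : ∃ xbar : X, ∃ r : ℝ, pRob F xbar = (r : EReal)) (xs : X →L[ℝ] ℝ) :
    List.TFAE
      [conj1 (pRob F) xs = qRob F xs,
       ∀ ε : ℝ, 0 ≤ ε → M1 (pRob F) ε xs = calA F ε xs,
       ∃ εbar : ℝ, 0 < εbar ∧
         ∀ ε : ℝ, 0 < ε → ε < εbar → M1 (pRob F) ε xs = calA F ε xs] := by
  tfae_have 1 → 2 := fun h ε _ => by rw [M1_pRob_eq_Sset h, calA_eq_Sset]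
  tfae_have 2 → 3 := fun h => ⟨1, one_pos, fun ε hε _ => h ε hε.le⟩
  tfae_have 3 → 1 := fun ⟨_, hεbar, h⟩ =>
    le_antisymm conj1_le_qRob (qRob_le_conj1_of_M1_eq_calA hdomp hεbar h)
  tfae_finish

/-- Theorem 3.1 (robust duality): `p*(x*) = q(x*)` iff `(M^ε p)(x*) = 𝒜^ε(x*)`. -/
theorem robust_duality_iff_M_eq_calA
    (F : ∀ u, X × Y u → EReal) (hU : Nonempty U) (hF : ∀ u z, F u z ≠ ⊥)
    (hdomp : ∃ xbar : X, ∃ r : ℝ, pRob F xbar = (r : EReal)) (xs : X →L[ℝ] ℝ) :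
    List.TFAE
      [conj1 (pRob F) xs = qRob F xs,
       ∀ ε : ℝ, 0 ≤ ε → M1 (pRob F) ε xs = calA F ε xs,
       ∃ εbar : ℝ, 0 < εbar ∧
         ∀ ε : ℝ, 0 < ε → ε < εbar → M1 (pRob F) ε xs = calA F ε xs] :=
  robust_duality_iff_M_eq_calA_general F hdomp xs

end RobustDuality
end
end

section
/- Let (f_u)_{u∈U} be a family of functions f_u : X → ℝ ∪ {+∞} with U nonempty, let p := sup_{u∈U} f_u with dom p ≠ ∅, and let x* ∈ X*. Then the formula (sup_{u∈U} f_u)*(x*) = min_{u∈U} f_u*(x*) (with the infimum attained) holds if and only if there exists u ∈ U such that (M^ε p)(x*) = B^ε_u(x*) for all ε ≥ 0, and also if and only if there exist ε̄ > 0 and u ∈ U such that (M^ε p)(x*) = B^ε_u(x*) for all ε ∈ (0, ε̄), where B^ε_u(x*) := ⋃_{ε₁,ε₂≥0, ε₁+ε₂=ε} (J^{ε₁}(u) ∩ (M^{ε₂}f_u)(x*)) and J^{ε₁}(u) := {x ∈ X : p(x) ∈ ℝ and f_u(x) ≥ p(x) − ε₁}. -/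
/-!
Tilt by `x*`: put `g := p - x*` and `h_u := f_u - x*`, so that `h_u ≤ g`, `inf g = -p*(x*)`
and `inf h_u = -f_u*(x*)`. Since `p* ≤ f_u*` for every `u`, the conjugate formula holds with the
minimum attained at `u` iff `inf g = inf h_u`. When the infima agree, an `ε`-minimizer `z` of `g`
splits its error `ε` into the gap `g z - h_u z` and the excess of `h_u z` over `inf h_u`, which is
exactly membership in `B^ε_u`. Conversely, any point of `B^ε_u` gives `inf g ≤ inf h_u + ε`, and
`ε`-minimizers of `g` exist for every `ε > 0` as soon as `inf g` is finite.
-/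

noncomputable section

namespace RobustDuality

variable {X : Type*} [AddCommGroup X] [Module ℝ X] [TopologicalSpace X]
  [IsTopologicalAddGroup X] [ContinuousSMul ℝ X] [LocallyConvexSpace ℝ X] [T2Space X]

variable {U : Type*}

/-- `p := sup_{u ∈ U} f_u`. -/
def pSup (f : U → X → EReal) (x : X) : EReal := ⨆ u, f u x

/-- `J^ε(u) := {x : p x ∈ ℝ ∧ f_u x ≥ p x - ε}`. -/
def J2set (f : U → X → EReal) (ε : ℝ) (u : U) : Set X :=
  {x | (∃ r : ℝ, pSup f x = (r : EReal)) ∧ pSup f x - (ε : EReal) ≤ f u x}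

/-- `𝒜^ε(x*)` for the non-perturbation case. -/
def calA2 (f : U → X → EReal) (ε : ℝ) (xs : X →L[ℝ] ℝ) : Set X :=
  ⋂ (η : ℝ) (_ : 0 < η),
    ⋃ (u : U) (ε₁ : ℝ) (ε₂ : ℝ) (_ : 0 ≤ ε₁) (_ : 0 ≤ ε₂) (_ : ε₁ + ε₂ = ε + η),
      J2set f ε₁ u ∩ M1 (f u) ε₂ xs

/-- `B^ε_u(x*)` for the non-perturbation case. -/
def B2set (f : U → X → EReal) (ε : ℝ) (u : U) (xs : X →L[ℝ] ℝ) : Set X :=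
  ⋃ (ε₁ : ℝ) (ε₂ : ℝ) (_ : 0 ≤ ε₁) (_ : 0 ≤ ε₂) (_ : ε₁ + ε₂ = ε),
    J2set f ε₁ u ∩ M1 (f u) ε₂ xs

/-- `I^ε(x) := {u : f_u x ≥ p x - ε}` (when `p x ∈ ℝ`). -/
def I2set (f : U → X → EReal) (ε : ℝ) (x : X) : Set U :=
  {u | (∃ r : ℝ, pSup f x = (r : EReal)) ∧ pSup f x - (ε : EReal) ≤ f u x}

/-- `C^ε(x)` for the non-perturbation case. -/
def C2set (f : U → X → EReal) (ε : ℝ) (x : X) : Set (X →L[ℝ] ℝ) :=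
  ⋂ (η : ℝ) (_ : 0 < η),
    ⋃ (ε₁ : ℝ) (ε₂ : ℝ) (_ : 0 ≤ ε₁) (_ : 0 ≤ ε₂) (_ : ε₁ + ε₂ = ε + η)
      (u : U) (_ : u ∈ I2set f ε₁ x), epsSubdiff1 (f u) ε₂ x

/-- `J(u) := {x : p x ∈ ℝ ∧ f_u x = p x}`. -/
def J02set (f : U → X → EReal) (u : U) : Set X :=
  {x | (∃ r : ℝ, pSup f x = (r : EReal)) ∧ f u x = pSup f x}

/-- `B_u(x*) := J(u) ∩ (M f_u)(x*)`. -/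
def B02set (f : U → X → EReal) (u : U) (xs : X →L[ℝ] ℝ) : Set X :=
  J02set f u ∩ M1 (f u) 0 xs

section Argmin

variable {Z : Type*} {g h : Z → EReal} {ε : ℝ} {z : Z}

def gapSet (g h : Z → EReal) (ε : ℝ) : Set Z :=
  {z | (∃ r : ℝ, g z = r) ∧ g z - ε ≤ h z}

def splitArgmin (g h : Z → EReal) (ε : ℝ) : Set Z :=
  ⋃ (ε₁ : ℝ) (ε₂ : ℝ) (_ : 0 ≤ ε₁) (_ : 0 ≤ ε₂) (_ : ε₁ + ε₂ = ε),
    gapSet g h ε₁ ∩ epsArgmin h ε₂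

lemma exists_iInf_eq_coe_of_mem_epsArgmin (hz : z ∈ epsArgmin h ε) :
    ∃ m : ℝ, ⨅ w, h w = m := by
  obtain ⟨⟨s, hs⟩, hle⟩ := hz
  have hne_top : ⨅ w, h w ≠ ⊤ := ((iInf_le h z).trans_lt (hs ▸ EReal.coe_lt_top s)).ne
  have hne_bot : ⨅ w, h w ≠ ⊥ := by
    intro hbot
    rw [hbot, EReal.bot_add, hs, le_bot_iff] at hle
    exact EReal.coe_ne_bot s hle
  exact ⟨_, (EReal.coe_toReal hne_top hne_bot).symm⟩

lemma mem_epsArgmin_iff_of_iInf_eq_coe {m : ℝ} (hm : ⨅ w, h w = m) :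
    z ∈ epsArgmin h ε ↔ ∃ s : ℝ, h z = s ∧ s ≤ m + ε := by
  simp only [epsArgmin, Set.mem_ofPred_eq, hm]
  constructor
  · rintro ⟨⟨s, hs⟩, hle⟩
    exact ⟨s, hs, by rw [hs] at hle; exact_mod_cast hle⟩
  · rintro ⟨s, hs, hle⟩
    exact ⟨⟨s, hs⟩, by rw [hs]; exact_mod_cast hle⟩

lemma epsArgmin_nonempty {m : ℝ} (hm : ⨅ w, h w = m) (hε : 0 < ε) :
    (epsArgmin h ε).Nonempty := by
  obtain ⟨z, hz⟩ := iInf_lt_iff.mp (hm ▸ (EReal.coe_lt_coe_iff.mpr (lt_add_of_pos_right m hε)))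
  have hmz : (m : EReal) ≤ h z := hm ▸ iInf_le h z
  lift h z to ℝ using ⟨hz.ne_top, ne_bot_of_le_ne_bot (EReal.coe_ne_bot m) hmz⟩ with s hs
  exact ⟨z, (mem_epsArgmin_iff_of_iInf_eq_coe hm).mpr ⟨s, hs.symm, by exact_mod_cast hz.le⟩⟩

lemma epsArgmin_eq_splitArgmin (hhg : h ≤ g) (hinf : ⨅ w, g w = ⨅ w, h w) :
    epsArgmin g ε = splitArgmin g h ε := by
  ext z
  simp only [splitArgmin, Set.mem_iUnion, Set.mem_inter_iff, gapSet, Set.mem_ofPred_eq]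
  by_cases hreal : ∃ m : ℝ, ⨅ w, h w = m
  swap
  · refine iff_of_false (fun hz => hreal ?_) fun ⟨_, _, _, _, _, _, hz⟩ => hreal ?_
    · exact hinf ▸ exists_iInf_eq_coe_of_mem_epsArgmin hz
    · exact exists_iInf_eq_coe_of_mem_epsArgmin hz
  obtain ⟨m, hm⟩ := hreal
  rw [mem_epsArgmin_iff_of_iInf_eq_coe (hinf.trans hm)]
  simp only [mem_epsArgmin_iff_of_iInf_eq_coe hm]
  constructor
  · rintro ⟨r, hr, hrm⟩
    have hmz : (m : EReal) ≤ h z := hm ▸ iInf_le h z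
    have hzr : h z ≤ r := hr ▸ hhg z
    lift h z to ℝ using ⟨(hzr.trans_lt (EReal.coe_lt_top r)).ne,
      ne_bot_of_le_ne_bot (EReal.coe_ne_bot m) hmz⟩ with s hs
    have hms : m ≤ s := by exact_mod_cast hmz
    have hsr : s ≤ r := by exact_mod_cast hzr
    refine ⟨r - s, ε - (r - s), by linarith, by linarith, by ring, ⟨⟨r, hr⟩, ?_⟩,
      s, rfl, by linarith⟩
    rw [hr, ← EReal.coe_sub, sub_sub_cancel]
  · rintro ⟨ε₁, ε₂, -, -, hsum, ⟨⟨r, hr⟩, hgap⟩, s, hs, hsm⟩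
    rw [hr, hs, ← EReal.coe_sub, EReal.coe_le_coe_iff] at hgap
    exact ⟨r, hr, by linarith⟩

lemma iInf_le_iInf_add_of_mem_splitArgmin (hz : z ∈ splitArgmin g h ε) :
    ⨅ w, g w ≤ (⨅ w, h w) + ε := by
  simp only [splitArgmin, Set.mem_iUnion, Set.mem_inter_iff, gapSet, Set.mem_ofPred_eq] at hz
  obtain ⟨ε₁, ε₂, -, -, hsum, ⟨⟨r, hr⟩, hgap⟩, hz⟩ := hz
  obtain ⟨m, hm⟩ := exists_iInf_eq_coe_of_mem_epsArgmin hz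
  obtain ⟨s, hs, hsm⟩ := (mem_epsArgmin_iff_of_iInf_eq_coe hm).mp hz
  rw [hr, hs, ← EReal.coe_sub, EReal.coe_le_coe_iff] at hgap
  calc ⨅ w, g w ≤ g z := iInf_le g z
    _ = r := hr
    _ ≤ (⨅ w, h w) + ε := by rw [hm, ← EReal.coe_add, EReal.coe_le_coe_iff]; linarith

lemma iInf_le_iInf_of_epsArgmin_subset_splitArgmin (hg : ⨅ w, g w ≠ ⊤) {εbar : ℝ}
    (hεbar : 0 < εbar)
    (hsub : ∀ ε, 0 < ε → ε < εbar → epsArgmin g ε ⊆ splitArgmin g h ε) :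
    ⨅ w, g w ≤ ⨅ w, h w := by
  refine EReal.ge_of_forall_gt_iff_ge.mp fun t ht => ?_
  obtain ⟨m, hm⟩ : ∃ m : ℝ, ⨅ w, g w = m := ⟨_, (EReal.coe_toReal hg (ne_bot_of_gt ht)).symm⟩
  rw [hm, EReal.coe_lt_coe_iff] at ht
  set ε := min (m - t) (εbar / 2)
  have hε : 0 < ε := lt_min (by linarith) (by linarith)
  obtain ⟨z, hz⟩ := epsArgmin_nonempty hm hε
  have hle := iInf_le_iInf_add_of_mem_splitArgmin
    (hsub ε hε ((min_le_right _ _).trans_lt (half_lt_self hεbar)) hz)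
  calc (t : EReal) ≤ ((m - ε : ℝ) : EReal) := by
        exact_mod_cast (by linarith [min_le_left (m - t) (εbar / 2)] : t ≤ m - ε)
    _ ≤ ⨅ w, h w := by rw [EReal.coe_sub, ← hm]; exact EReal.sub_le_of_le_add hle

lemma gapSet_sub_coe (g h : Z → EReal) (l : Z → ℝ) (ε : ℝ) :
    gapSet (fun z => g z - l z) (fun z => h z - l z) ε = gapSet g h ε := by
  ext z
  simp only [gapSet, Set.mem_ofPred_eq]
  induction g z with
  | bot => simp
  | top => simp
  | coe r =>
    induction h z with
    | bot => simp [← EReal.coe_sub]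
    | top => simp [← EReal.coe_sub]
    | coe s =>
      simp only [← EReal.coe_sub, EReal.coe_le_coe_iff, exists_apply_eq_apply', true_and]
      constructor <;> intro _ <;> linarith

end Argmin

section Conjugate

variable {E : Type*} [AddCommGroup E] [Module ℝ E] [TopologicalSpace E]

lemma conj1_eq_neg_iInf (h : E → EReal) (xs : E →L[ℝ] ℝ) :
    conj1 h xs = -⨅ x, (h x - xs x) := by
  have hneg : ∀ x, -(h x - xs x) = (xs x : EReal) - h x := fun x => by
    rw [EReal.neg_sub (Or.inr (EReal.coe_ne_bot _)) (Or.inr (EReal.coe_ne_top _)), add_comm,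
      sub_eq_add_neg]
  apply le_antisymm
  · refine iSup_le fun x => EReal.le_neg.mpr ?_
    rw [← hneg, neg_neg]
    exact iInf_le _ x
  · refine EReal.neg_le.mpr (le_iInf fun x => EReal.neg_le.mp ?_)
    rw [hneg]
    exact le_iSup (fun x => (xs x : EReal) - h x) x

lemma conj1_pSup_le (f : U → E → EReal) (xs : E →L[ℝ] ℝ) (u : U) :
    conj1 (pSup f) xs ≤ conj1 (f u) xs :=
  iSup_mono fun x => EReal.sub_le_sub le_rfl (le_iSup (fun v => f v x) u)

lemma conj1_eq_iInf_of_conj1_pSup_eq {f : U → E → EReal} {xs : E →L[ℝ] ℝ} {u : U}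
    (hu : conj1 (pSup f) xs = conj1 (f u) xs) : conj1 (f u) xs = ⨅ v, conj1 (f v) xs :=
  le_antisymm (le_iInf fun v => hu ▸ conj1_pSup_le f xs v) (iInf_le _ u)

lemma B2set_eq_splitArgmin (f : U → E → EReal) (ε : ℝ) (u : U) (xs : E →L[ℝ] ℝ) :
    B2set f ε u xs = splitArgmin (fun x => pSup f x - xs x) (fun x => f u x - xs x) ε := by
  simp only [splitArgmin, gapSet_sub_coe]
  rfl

end Conjugate

theorem strong_infSup_duality_iff_M_eq_Bset_general
    (f : U → X → EReal)
    (hdomp : ∃ x : X, pSup f x ≠ ⊤) (xs : X →L[ℝ] ℝ) :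
    List.TFAE
      [∃ u : U, conj1 (pSup f) xs = conj1 (f u) xs ∧
         conj1 (f u) xs = ⨅ v : U, conj1 (f v) xs,
       ∃ u : U, ∀ ε : ℝ, 0 ≤ ε → M1 (pSup f) ε xs = B2set f ε u xs,
       ∃ εbar : ℝ, 0 < εbar ∧ ∃ u : U,
         ∀ ε : ℝ, 0 < ε → ε < εbar → M1 (pSup f) ε xs = B2set f ε u xs] := by
  have htilt : ∀ u x, f u x - xs x ≤ pSup f x - xs x := fun u x =>
    EReal.sub_le_sub (le_iSup (fun v => f v x) u) le_rfl
  have hconj : ∀ u, conj1 (pSup f) xs = conj1 (f u) xs ↔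
      ⨅ x, (pSup f x - xs x) = ⨅ x, (f u x - xs x) := fun u => by
    rw [conj1_eq_neg_iInf, conj1_eq_neg_iInf, neg_inj]
  have hdom : ⨅ x, (pSup f x - xs x) ≠ ⊤ := by
    obtain ⟨x, hx⟩ := hdomp
    exact ne_top_of_le_ne_top (EReal.add_ne_top hx (by simp)) (iInf_le _ x)
  tfae_have 1 → 2
  | ⟨u, hu, _⟩ => ⟨u, fun ε _ => by
      rw [B2set_eq_splitArgmin, ← epsArgmin_eq_splitArgmin (htilt u) ((hconj u).mp hu)]
      rfl⟩
  tfae_have 2 → 3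
  | ⟨u, hu⟩ => ⟨1, one_pos, u, fun ε hε _ => hu ε hε.le⟩
  tfae_have 3 → 1
  | ⟨εbar, hεbar, u, hu⟩ => by
    have hinf := iInf_le_iInf_of_epsArgmin_subset_splitArgmin hdom hεbar fun ε hε hεb =>
      ((hu ε hε hεb).trans (B2set_eq_splitArgmin f ε u xs)).subset
    have hconj_u := (hconj u).mpr (le_antisymm hinf (iInf_mono (htilt u)))
    exact ⟨u, hconj_u, conj1_eq_iInf_of_conj1_pSup_eq hconj_u⟩
  tfae_finish

/-- Corollary 4.2 (strong robust duality for Case 2: no linear perturbations). -/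
theorem strong_infSup_duality_iff_M_eq_Bset
    (f : U → X → EReal) (hU : Nonempty U) (hf : ∀ u x, f u x ≠ ⊥)
    (hdomp : ∃ x : X, pSup f x ≠ ⊤) (xs : X →L[ℝ] ℝ) :
    List.TFAE
      [∃ u : U, conj1 (pSup f) xs = conj1 (f u) xs ∧
         conj1 (f u) xs = ⨅ v : U, conj1 (f v) xs,
       ∃ u : U, ∀ ε : ℝ, 0 ≤ ε → M1 (pSup f) ε xs = B2set f ε u xs,
       ∃ εbar : ℝ, 0 < εbar ∧ ∃ u : U,
         ∀ ε : ℝ, 0 < ε → ε < εbar → M1 (pSup f) ε xs = B2set f ε u xs] :=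
  strong_infSup_duality_iff_M_eq_Bset_general f hdomp xs

end RobustDuality
end
end

section
/- Let x* ∈ X* be such that (Mp)(x*) := (M⁰p)(x*) = argmin(p − x*) is nonempty. Then the following are equivalent: (i) min-max robust duality holds at x*, i.e., there exist u ∈ U and y_u* ∈ Y_u* such that the (attained) minimum of p − x* over X equals −F_u*(x*, y_u*) = −q(x*); (ii) there exist u ∈ U and y_u* ∈ Y_u* such that (Mp)(x*) = B_{(u,y_u*)}(x*), where B_{(u,y_u*)}(x*) := {x ∈ J(u) : (x, 0_u) ∈ (MF_u)(x*, y_u*)}, J(u) := {x ∈ X : p(x) ∈ ℝ and F_u(x, 0_u) = p(x)}, and (MF_u)(x*, y_u*) := argmin(F_u − ⟨x*, ·⟩ − ⟨y_u*, ·⟩). -/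
noncomputable section

namespace RobustDuality

variable {X : Type*} [AddCommGroup X] [Module ℝ X] [TopologicalSpace X]
  [IsTopologicalAddGroup X] [ContinuousSMul ℝ X] [LocallyConvexSpace ℝ X] [T2Space X]

variable {U : Type*} {Y : U → Type*} [∀ u, AddCommGroup (Y u)] [∀ u, Module ℝ (Y u)]
  [∀ u, TopologicalSpace (Y u)] [∀ u, IsTopologicalAddGroup (Y u)]
  [∀ u, ContinuousSMul ℝ (Y u)] [∀ u, LocallyConvexSpace ℝ (Y u)] [∀ u, T2Space (Y u)]

/-!
Weak duality: for all `u`, `y*` and `x`,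
`-F_u*(x*, y*) = inf (F_u - ⟨x*, ·⟩ - ⟨y*, ·⟩) ≤ F_u(x, 0) - ⟨x*, x⟩ ≤ p(x) - ⟨x*, x⟩`.
If `-F_u*(x*, y*)` equals `min (p - x*)`, then at a minimizer `x` of `p - x*` the chain collapses,
which says precisely that `x ∈ B_{(u,y*)}(x*)`; conversely every point of `B_{(u,y*)}(x*)` attains
the bound, so `(Mp)(x*) = B_{(u,y*)}(x*)`, and `F_u*(x*, y*)` is then the least of all conjugate
values, i.e. `q(x*)`. For (ii) ⇒ (i), run the chain at any point of `(Mp)(x*) = B_{(u,y*)}(x*)`.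
-/

lemma _root_.EReal.neg_coe_sub (r : ℝ) (b : EReal) : -((r : EReal) - b) = b - r := by
  rw [EReal.neg_sub (.inl (EReal.coe_ne_bot r)) (.inl (EReal.coe_ne_top r)), add_comm,
    sub_eq_add_neg]

lemma _root_.EReal.neg_iSup {ι : Sort*} (f : ι → EReal) : -(⨆ i, f i) = ⨅ i, -f i :=
  EReal.negOrderIso.map_iSup f

lemma _root_.EReal.sub_coe_left_injective (r : ℝ) : Function.Injective fun a : EReal => a - r :=
  fun a b h => by simpa only [EReal.sub_add_cancel] using congrArg (· + (r : EReal)) h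

lemma mem_epsArgmin_zero_iff {Z : Type*} {h : Z → EReal} {z : Z} :
    z ∈ epsArgmin h 0 ↔ (∃ r : ℝ, h z = r) ∧ h z = ⨅ w, h w := by
  simp only [epsArgmin, Set.mem_ofPred_eq, EReal.coe_zero, add_zero]
  exact and_congr_right fun _ => ⟨fun hle => hle.antisymm (iInf_le h z), le_of_eq⟩

section Duality

variable {X : Type*} {U : Type*} {Y : U → Type*} [∀ u, AddCommGroup (Y u)]

lemma apply_zero_le_pRob (F : ∀ u, X × Y u → EReal) (u : U) (x : X) : F u (x, 0) ≤ pRob F x :=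
  le_iSup (fun v => F v (x, 0)) u

variable [AddCommGroup X] [Module ℝ X] [TopologicalSpace X]
  {Yu : Type*} [AddCommGroup Yu] [Module ℝ Yu] [TopologicalSpace Yu]
  [∀ u, Module ℝ (Y u)] [∀ u, TopologicalSpace (Y u)]

lemma neg_conj2_eq_iInf (F : X × Yu → EReal) (xs : X →L[ℝ] ℝ) (ys : Yu →L[ℝ] ℝ) :
    -conj2 F xs ys = ⨅ z, F z - ((xs z.1 + ys z.2 : ℝ) : EReal) := by
  simp only [conj2, EReal.neg_iSup, EReal.neg_coe_sub]

lemma neg_conj2_le_sub_coupling (F : X × Yu → EReal) (xs : X →L[ℝ] ℝ) (ys : Yu →L[ℝ] ℝ)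
    (z : X × Yu) : -conj2 F xs ys ≤ F z - ((xs z.1 + ys z.2 : ℝ) : EReal) :=
  (neg_conj2_eq_iInf F xs ys).trans_le (iInf_le _ z)

lemma neg_conj2_le_apply_zero_sub (F : X × Yu → EReal) (xs : X →L[ℝ] ℝ) (ys : Yu →L[ℝ] ℝ)
    (x : X) : -conj2 F xs ys ≤ F (x, 0) - ((xs x : ℝ) : EReal) := by
  simpa only [map_zero, add_zero] using neg_conj2_le_sub_coupling F xs ys (x, 0)

lemma neg_conj2_le_pRob_sub (F : ∀ u, X × Y u → EReal) (xs : X →L[ℝ] ℝ) (u : U)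
    (ys : Y u →L[ℝ] ℝ) (x : X) : -conj2 (F u) xs ys ≤ pRob F x - ((xs x : ℝ) : EReal) :=
  (neg_conj2_le_apply_zero_sub (F u) xs ys x).trans
    (EReal.sub_le_sub (apply_zero_le_pRob F u x) le_rfl)

lemma conj2_eq_qRob_of_neg_conj2_eq_iInf {F : ∀ u, X × Y u → EReal} {xs : X →L[ℝ] ℝ} {u : U}
    {ys : Y u →L[ℝ] ℝ} (h : -conj2 (F u) xs ys = ⨅ x, pRob F x - ((xs x : ℝ) : EReal)) :
    conj2 (F u) xs ys = qRob F xs := by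
  refine le_antisymm (le_iInf₂ fun v ys' => ?_) (iInf_le_of_le u (iInf_le _ ys))
  rw [← EReal.neg_le_neg_iff, h]
  exact le_iInf (neg_conj2_le_pRob_sub F xs v ys')

lemma M1_eq_B0set_of_neg_conj2_eq_iInf {F : ∀ u, X × Y u → EReal} {xs : X →L[ℝ] ℝ} {u : U}
    {ys : Y u →L[ℝ] ℝ} (h : -conj2 (F u) xs ys = ⨅ x, pRob F x - ((xs x : ℝ) : EReal)) :
    M1 (pRob F) 0 xs = B0set F u ys xs := by
  ext x
  simp only [M1, B0set, M2, mem_epsArgmin_zero_iff, Set.mem_ofPred_eq, map_zero, add_zero,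
    ← neg_conj2_eq_iInf, h]
  constructor
  · rintro ⟨⟨r, hr⟩, hmin⟩
    have hFu : F u (x, 0) - ((xs x : ℝ) : EReal) = pRob F x - ((xs x : ℝ) : EReal) := by
      refine le_antisymm (EReal.sub_le_sub (apply_zero_le_pRob F u x) le_rfl) ?_
      rw [hmin, ← h]
      exact neg_conj2_le_apply_zero_sub (F u) xs ys x
    have hp : pRob F x = ((r + xs x : ℝ) : EReal) := by
      rw [← EReal.sub_add_cancel (a := pRob F x) (b := xs x), hr, EReal.coe_add]
    exact ⟨⟨r + xs x, hp⟩, EReal.sub_coe_left_injective _ hFu, ⟨r, hFu.trans hr⟩,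
      hFu.trans hmin⟩
  · rintro ⟨-, hFu, hfin, hmin⟩
    rw [hFu] at hfin hmin
    exact ⟨hfin, hmin⟩

lemma neg_conj2_eq_iInf_of_mem_M1_of_mem_B0set {F : ∀ u, X × Y u → EReal} {xs : X →L[ℝ] ℝ}
    {u : U} {ys : Y u →L[ℝ] ℝ} {x : X} (hM : x ∈ M1 (pRob F) 0 xs)
    (hB : x ∈ B0set F u ys xs) :
    -conj2 (F u) xs ys = ⨅ x, pRob F x - ((xs x : ℝ) : EReal) := by
  obtain ⟨-, hFu, hmin⟩ := hB
  have hminFu := (mem_epsArgmin_zero_iff.1 hmin).2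
  simp only [map_zero, add_zero, ← neg_conj2_eq_iInf, hFu] at hminFu
  exact hminFu.symm.trans (mem_epsArgmin_zero_iff.1 hM).2

end Duality

theorem minmax_robust_duality_iff_general
    (F : ∀ u, X × Y u → EReal)
    (xs : X →L[ℝ] ℝ) (hM : (M1 (pRob F) 0 xs).Nonempty) :
    (∃ (u : U) (ys : Y u →L[ℝ] ℝ) (xbar : X),
       (pRob F xbar - ((xs xbar : ℝ) : EReal) =
         ⨅ z : X, (pRob F z - ((xs z : ℝ) : EReal))) ∧
       pRob F xbar - ((xs xbar : ℝ) : EReal) = -conj2 (F u) xs ys ∧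
       conj2 (F u) xs ys = qRob F xs) ↔
    (∃ (u : U) (ys : Y u →L[ℝ] ℝ), M1 (pRob F) 0 xs = B0set F u ys xs) := by
  constructor
  · rintro ⟨u, ys, xbar, hmin, hval, -⟩
    exact ⟨u, ys, M1_eq_B0set_of_neg_conj2_eq_iInf (hval.symm.trans hmin)⟩
  · rintro ⟨u, ys, hMB⟩
    obtain ⟨x, hx⟩ := hM
    have hdual := neg_conj2_eq_iInf_of_mem_M1_of_mem_B0set hx (hMB ▸ hx)
    have hmin := (mem_epsArgmin_zero_iff.1 hx).2
    exact ⟨u, ys, x, hmin, hmin.trans hdual.symm, conj2_eq_qRob_of_neg_conj2_eq_iInf hdual⟩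

/-- Theorem 5.2 (min-max robust duality). -/
theorem minmax_robust_duality_iff
    (F : ∀ u, X × Y u → EReal) (hU : Nonempty U) (hF : ∀ u z, F u z ≠ ⊥)
    (xs : X →L[ℝ] ℝ) (hM : (M1 (pRob F) 0 xs).Nonempty) :
    (∃ (u : U) (ys : Y u →L[ℝ] ℝ) (xbar : X),
       (pRob F xbar - ((xs xbar : ℝ) : EReal) =
         ⨅ z : X, (pRob F z - ((xs z : ℝ) : EReal))) ∧
       pRob F xbar - ((xs xbar : ℝ) : EReal) = -conj2 (F u) xs ys ∧
       conj2 (F u) xs ys = qRob F xs) ↔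
    (∃ (u : U) (ys : Y u →L[ℝ] ℝ), M1 (pRob F) 0 xs = B0set F u ys xs) :=
  minmax_robust_duality_iff_general F xs hM

end RobustDuality
end
end
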